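/- arXiv:2605.25592 — 4 statements merged into one kernel-verified Lean document; each statement's English description precedes it below -/
import Mathlib

section
/- Fix θ₀ ∈ ℝ^d and a design π over 𝒮 such that M_{θ₀}(π) is positive definite. Suppose g̃_{θ₀}(π) ≤ (1+ε)(d+1) for some ε ≥ 0, and let ε_lift ≥ 0 satisfy Δ_{θ₀}(π) ⪯ ε_lift · M_{θ₀}(π) in the Loewner order. Then g_{θ₀}(π) ≤ (1+ε_lift)((1+ε)d + ε) ≤ 2(1+ε_lift)(1+ε)d. -/
/-!
Write `M = M_θ(π)` and `M̂ = M + Δ`. Because `Σ_S π(S) = 1`, the parallel-axis identity gives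
`Δ = E_π[(ā(S) - b̄)(ā(S) - b̄)ᵀ] ⪰ 0`, so `M̂` is positive definite, and `(1 + ε_lift) M ⪰ M̂`
turns into `M⁻¹ ⪯ (1 + ε_lift) M̂⁻¹`. For each assortment `S`,
`tr(M⁻¹ I(S)) = Σ_i p_i ‖a_i - ā(S)‖²_{M⁻¹} ≤ (1 + ε_lift) Σ_i p_i ‖a_i - ā(S)‖²_{M̂⁻¹}`, and
recentring at `b̄` instead of the mean `ā(S)` can only increase the last sum. Finally
`M̃ = [[B̄, b̄], [b̄ᵀ, 1]]` has Schur complement `M̂`, so `ãᵢᵀ M̃⁻¹ ãᵢ = 1 + ‖a_i - b̄‖²_{M̂⁻¹}`: the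
recentred sum is `tr(M̃⁻¹ Ĩ(S)) - 1 ≤ (1 + ε)(d + 1) - 1`.
-/

open Matrix

noncomputable section

/-- MNL choice probability without outside option. -/
def mnlP {N d : ℕ} (a : Fin N → Fin d → ℝ) (θ : Fin d → ℝ) (S : Finset (Fin N)) (i : Fin N) : ℝ :=
  Real.exp (a i ⬝ᵥ θ) / ∑ j ∈ S, Real.exp (a j ⬝ᵥ θ)

/-- Mean feature vector under the MNL choice probabilities. -/
def abar {N d : ℕ} (a : Fin N → Fin d → ℝ) (θ : Fin d → ℝ) (S : Finset (Fin N)) : Fin d → ℝ :=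
  ∑ j ∈ S, mnlP a θ S j • a j

/-- Fisher information matrix of an assortment under the MNL model. -/
def fisher {N d : ℕ} (a : Fin N → Fin d → ℝ) (θ : Fin d → ℝ) (S : Finset (Fin N)) :
    Matrix (Fin d) (Fin d) ℝ :=
  ∑ i ∈ S, mnlP a θ S i • vecMulVec (a i - abar a θ S) (a i - abar a θ S)

/-- A design: a probability distribution over the collection `𝒮` of feasible assortments. -/
def IsDesign {N : ℕ} (𝒮 : Finset (Finset (Fin N))) (π : Finset (Fin N) → ℝ) : Prop :=
  (∀ S, 0 ≤ π S) ∧ (∀ S, S ∉ 𝒮 → π S = 0) ∧ (∑ S ∈ 𝒮, π S) = 1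

/-- Expected Fisher information matrix of a design. -/
def designM {N d : ℕ} (a : Fin N → Fin d → ℝ) (θ : Fin d → ℝ) (𝒮 : Finset (Finset (Fin N)))
    (π : Finset (Fin N) → ℝ) : Matrix (Fin d) (Fin d) ℝ :=
  ∑ S ∈ 𝒮, π S • fisher a θ S

/-- The G-optimality objective. -/
def gObj {N d : ℕ} (a : Fin N → Fin d → ℝ) (θ : Fin d → ℝ) (𝒮 : Finset (Finset (Fin N)))
    (π : Finset (Fin N) → ℝ) : ℝ :=
  sSup ((fun S => ((designM a θ 𝒮 π)⁻¹ * fisher a θ S).trace) '' (𝒮 : Set (Finset (Fin N))))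

/-- Lifted feature vector `ã_i = (a_iᵀ, 1)ᵀ ∈ ℝ^{d+1}`. -/
def liftedFeat {N d : ℕ} (a : Fin N → Fin d → ℝ) (i : Fin N) : Fin (d + 1) → ℝ :=
  Fin.snoc (a i) 1

/-- Lifted (uncentered) second-moment matrix. -/
def liftedI {N d : ℕ} (a : Fin N → Fin d → ℝ) (θ : Fin d → ℝ) (S : Finset (Fin N)) :
    Matrix (Fin (d + 1)) (Fin (d + 1)) ℝ :=
  ∑ i ∈ S, mnlP a θ S i • vecMulVec (liftedFeat a i) (liftedFeat a i)

/-- Lifted design matrix. -/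
def liftedM {N d : ℕ} (a : Fin N → Fin d → ℝ) (θ : Fin d → ℝ) (𝒮 : Finset (Finset (Fin N)))
    (π : Finset (Fin N) → ℝ) : Matrix (Fin (d + 1)) (Fin (d + 1)) ℝ :=
  ∑ S ∈ 𝒮, π S • liftedI a θ S

/-- Lifted G-optimality objective. -/
def gLift {N d : ℕ} (a : Fin N → Fin d → ℝ) (θ : Fin d → ℝ) (𝒮 : Finset (Finset (Fin N)))
    (π : Finset (Fin N) → ℝ) : ℝ :=
  sSup ((fun S => ((liftedM a θ 𝒮 π)⁻¹ * liftedI a θ S).trace) '' (𝒮 : Set (Finset (Fin N))))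

/-- Uncentered second-moment matrix `Ā_θ(S)`. -/
def Abar {N d : ℕ} (a : Fin N → Fin d → ℝ) (θ : Fin d → ℝ) (S : Finset (Fin N)) :
    Matrix (Fin d) (Fin d) ℝ :=
  ∑ i ∈ S, mnlP a θ S i • vecMulVec (a i) (a i)

/-- `B̄_θ(π) = E_{S∼π}[Ā_θ(S)]`. -/
def Bbar {N d : ℕ} (a : Fin N → Fin d → ℝ) (θ : Fin d → ℝ) (𝒮 : Finset (Finset (Fin N)))
    (π : Finset (Fin N) → ℝ) : Matrix (Fin d) (Fin d) ℝ :=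
  ∑ S ∈ 𝒮, π S • Abar a θ S

/-- `b̄_θ(π) = E_{S∼π}[ā_θ(S)]`. -/
def bbar {N d : ℕ} (a : Fin N → Fin d → ℝ) (θ : Fin d → ℝ) (𝒮 : Finset (Finset (Fin N)))
    (π : Finset (Fin N) → ℝ) : Fin d → ℝ :=
  ∑ S ∈ 𝒮, π S • abar a θ S

/-- Schur-complement surrogate `M̂_θ(π) = B̄_θ(π) − b̄_θ(π) b̄_θ(π)ᵀ`. -/
def Mhat {N d : ℕ} (a : Fin N → Fin d → ℝ) (θ : Fin d → ℝ) (𝒮 : Finset (Finset (Fin N)))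
    (π : Finset (Fin N) → ℝ) : Matrix (Fin d) (Fin d) ℝ :=
  Bbar a θ 𝒮 π - vecMulVec (bbar a θ 𝒮 π) (bbar a θ 𝒮 π)

/-- Design-mismatch matrix `Δ_θ(π) = M̂_θ(π) − M_θ(π)`. -/
def mismatch {N d : ℕ} (a : Fin N → Fin d → ℝ) (θ : Fin d → ℝ) (𝒮 : Finset (Finset (Fin N)))
    (π : Finset (Fin N) → ℝ) : Matrix (Fin d) (Fin d) ℝ :=
  Mhat a θ 𝒮 π - designM a θ 𝒮 π

lemma sum_mul_sub_mul_sub_eq {ι : Type*} {s : Finset ι} {p : ι → ℝ} (hp : ∑ i ∈ s, p i = 1)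
    (f g : ι → ℝ) (a b : ℝ) :
    ∑ i ∈ s, p i * ((f i - a) * (g i - b)) =
      ∑ i ∈ s, p i * ((f i - ∑ j ∈ s, p j * f j) * (g i - ∑ j ∈ s, p j * g j))
        + (∑ j ∈ s, p j * f j - a) * (∑ j ∈ s, p j * g j - b) := by
  set F := ∑ j ∈ s, p j * f j
  set G := ∑ j ∈ s, p j * g j
  have hsplit : ∀ i ∈ s, p i * ((f i - a) * (g i - b)) =
      p i * ((f i - F) * (g i - G)) + (F - a) * (p i * g i) + (G - b) * (p i * f i)
        + (a * b - F * G) * p i := fun i _ => by ring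
  rw [Finset.sum_congr rfl hsplit]
  simp only [Finset.sum_add_distrib, ← Finset.mul_sum, hp]
  ring

namespace Matrix

variable {n ι : Type*}

-- The parallel-axis (König–Huygens) identity for weighted second moments.
theorem sum_smul_vecMulVec_sub_eq {s : Finset ι} {p : ι → ℝ} (hp : ∑ i ∈ s, p i = 1)
    (v : ι → n → ℝ) (c : n → ℝ) :
    ∑ i ∈ s, p i • vecMulVec (v i - c) (v i - c) =
      ∑ i ∈ s, p i • vecMulVec (v i - ∑ j ∈ s, p j • v j) (v i - ∑ j ∈ s, p j • v j)
        + vecMulVec (∑ j ∈ s, p j • v j - c) (∑ j ∈ s, p j • v j - c) := by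
  ext k l
  simpa [vecMulVec_apply, Matrix.sum_apply, Finset.sum_apply] using
    sum_mul_sub_mul_sub_eq hp (fun i => v i k) (fun i => v i l) (c k) (c l)

variable [Fintype n]

lemma IsHermitian.dotProduct_mulVec_comm {A : Matrix n n ℝ} (hA : A.IsHermitian) (u v : n → ℝ) :
    u ⬝ᵥ A *ᵥ v = v ⬝ᵥ A *ᵥ u := by
  have hAt : Aᵀ = A := by simpa [conjTranspose_eq_transpose_of_trivial] using hA.eq
  rw [← dotProduct_transpose_mulVec, hAt]

lemma trace_mul_sum_smul_vecMulVec (A : Matrix n n ℝ) (s : Finset ι) (c : ι → ℝ)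
    (w : ι → n → ℝ) :
    (A * ∑ i ∈ s, c i • vecMulVec (w i) (w i)).trace = ∑ i ∈ s, c i * (w i ⬝ᵥ A *ᵥ w i) := by
  simp [Finset.mul_sum, trace_sum, mul_vecMulVec, dotProduct_comm]

lemma posSemidef_sum_smul_vecMulVec {s : Finset ι} {c : ι → ℝ} (hc : ∀ i ∈ s, 0 ≤ c i)
    (w : ι → n → ℝ) : (∑ i ∈ s, c i • vecMulVec (w i) (w i)).PosSemidef :=
  posSemidef_sum s fun i hi => by
    simpa using (posSemidef_vecMulVec_self_star (w i)).smul (hc i hi)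

lemma sum_mul_dotProduct_mulVec_sub_mean_le {s : Finset ι} {p : ι → ℝ}
    (hp : ∑ i ∈ s, p i = 1) (v : ι → n → ℝ) {A : Matrix n n ℝ} (hA : A.PosSemidef)
    (c : n → ℝ) :
    ∑ i ∈ s, p i * ((v i - ∑ j ∈ s, p j • v j) ⬝ᵥ A *ᵥ (v i - ∑ j ∈ s, p j • v j)) ≤
      ∑ i ∈ s, p i * ((v i - c) ⬝ᵥ A *ᵥ (v i - c)) := by
  rw [← trace_mul_sum_smul_vecMulVec, ← trace_mul_sum_smul_vecMulVec,
    sum_smul_vecMulVec_sub_eq hp v c, Matrix.mul_add, trace_add, mul_vecMulVec, trace_vecMulVec,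
    dotProduct_comm]
  simpa using hA.dotProduct_mulVec_nonneg (∑ j ∈ s, p j • v j - c)

variable [DecidableEq n]

lemma PosDef.two_mul_dotProduct_sub_le_dotProduct_inv_mulVec {B : Matrix n n ℝ}
    (hB : B.PosDef) (u y : n → ℝ) : 2 * (y ⬝ᵥ u) - y ⬝ᵥ B *ᵥ y ≤ u ⬝ᵥ B⁻¹ *ᵥ u := by
  set z := B⁻¹ *ᵥ u
  have hBz : B *ᵥ z = u := by
    rw [mulVec_mulVec, mul_nonsing_inv _ hB.det_pos.ne'.isUnit, one_mulVec]
  have h := hB.posSemidef.dotProduct_mulVec_nonneg (y - z)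
  simp only [star_trivial, mulVec_sub, dotProduct_sub, sub_dotProduct, hBz,
    hB.isHermitian.dotProduct_mulVec_comm z y] at h
  linarith [dotProduct_comm z u]

lemma PosDef.dotProduct_inv_mulVec_le_of_posSemidef_sub {A B : Matrix n n ℝ} (hA : A.PosDef)
    (hB : B.PosDef) (hAB : (A - B).PosSemidef) (u : n → ℝ) :
    u ⬝ᵥ A⁻¹ *ᵥ u ≤ u ⬝ᵥ B⁻¹ *ᵥ u := by
  set y := A⁻¹ *ᵥ u
  have hAy : A *ᵥ y = u := by
    rw [mulVec_mulVec, mul_nonsing_inv _ hA.det_pos.ne'.isUnit, one_mulVec]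
  have h := hAB.dotProduct_mulVec_nonneg y
  simp only [star_trivial, sub_mulVec, dotProduct_sub, hAy] at h
  linarith [hB.two_mul_dotProduct_sub_le_dotProduct_inv_mulVec u y, dotProduct_comm u y]

end Matrix

namespace Fin

variable {d : ℕ}

lemma snoc_dotProduct_snoc (u v : Fin d → ℝ) (α β : ℝ) :
    (snoc u α : Fin (d + 1) → ℝ) ⬝ᵥ snoc v β = u ⬝ᵥ v + α * β := by
  simp [dotProduct, sum_univ_castSucc]

lemma smul_snoc (r : ℝ) (u : Fin d → ℝ) (α : ℝ) :
    r • (snoc u α : Fin (d + 1) → ℝ) = snoc (r • u) (r * α) := by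
  ext j
  refine lastCases ?_ (fun k => ?_) j <;> simp

lemma sum_snoc_eq_snoc_sum {ι : Type*} (s : Finset ι) (f : ι → Fin d → ℝ) (g : ι → ℝ) :
    ∑ i ∈ s, (snoc (f i) (g i) : Fin (d + 1) → ℝ) = snoc (∑ i ∈ s, f i) (∑ i ∈ s, g i) := by
  ext j
  refine lastCases ?_ (fun k => ?_) j <;> simp [Finset.sum_apply]

end Fin

namespace Matrix

variable {d : ℕ} {K : Matrix (Fin (d + 1)) (Fin (d + 1)) ℝ} {P : Matrix (Fin d) (Fin d) ℝ}
  {b : Fin d → ℝ}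

/- `hKP` says that `K` is the block matrix `!![P + b bᵀ, b; bᵀ, 1]`, whose Schur complement
with respect to the corner entry is `P`. -/
lemma posDef_of_mulVec_snoc (hK : K.IsHermitian) (hP : P.PosDef)
    (hKP : ∀ z c, K *ᵥ Fin.snoc z c = Fin.snoc (P *ᵥ z + (b ⬝ᵥ z + c) • b) (b ⬝ᵥ z + c)) :
    K.PosDef := by
  refine PosDef.of_dotProduct_mulVec_pos hK fun x hx => ?_
  rw [← Fin.snoc_init_self x] at hx ⊢
  set z := Fin.init x
  set c := x (Fin.last d)
  have hquad : Fin.snoc z c ⬝ᵥ K *ᵥ Fin.snoc z c = z ⬝ᵥ P *ᵥ z + (b ⬝ᵥ z + c) ^ 2 := by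
    rw [hKP, Fin.snoc_dotProduct_snoc, dotProduct_add, dotProduct_smul, dotProduct_comm z b,
      smul_eq_mul]
    ring
  rw [star_trivial, hquad]
  rcases eq_or_ne z 0 with hz | hz
  · have hc : c ≠ 0 := by
      rintro hc
      refine hx (funext fun j => Fin.lastCases ?_ (fun k => ?_) j) <;> simp [hz, hc]
    simpa [hz] using sq_pos_of_ne_zero hc
  · simpa using add_pos_of_pos_of_nonneg (hP.dotProduct_mulVec_pos hz) (sq_nonneg (b ⬝ᵥ z + c))

lemma snoc_one_dotProduct_inv_mulVec (hK : IsUnit K.det) (hP : IsUnit P.det)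
    (hKP : ∀ z c, K *ᵥ Fin.snoc z c = Fin.snoc (P *ᵥ z + (b ⬝ᵥ z + c) • b) (b ⬝ᵥ z + c))
    (x : Fin d → ℝ) :
    (Fin.snoc x 1 : Fin (d + 1) → ℝ) ⬝ᵥ K⁻¹ *ᵥ Fin.snoc x 1 = 1 + (x - b) ⬝ᵥ P⁻¹ *ᵥ (x - b) := by
  set z := P⁻¹ *ᵥ (x - b)
  have hPz : P *ᵥ z = x - b := by rw [mulVec_mulVec, mul_nonsing_inv _ hP, one_mulVec]
  have hKz : K *ᵥ Fin.snoc z (1 - b ⬝ᵥ z) = Fin.snoc x 1 := by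
    rw [hKP, hPz]
    congr 1 <;> simp
  have hinv : K⁻¹ *ᵥ Fin.snoc x 1 = Fin.snoc z (1 - b ⬝ᵥ z) := by
    rw [← hKz, mulVec_mulVec, nonsing_inv_mul _ hK, one_mulVec]
  rw [hinv, Fin.snoc_dotProduct_snoc, sub_dotProduct]
  ring

end Matrix

section MNL

variable {N d : ℕ} (a : Fin N → Fin d → ℝ) (θ : Fin d → ℝ) {S : Finset (Fin N)}
  {𝒮 : Finset (Finset (Fin N))} {π : Finset (Fin N) → ℝ}

lemma mnlP_nonneg (S : Finset (Fin N)) (i : Fin N) : 0 ≤ mnlP a θ S i :=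
  div_nonneg (Real.exp_pos _).le (Finset.sum_nonneg fun _ _ => (Real.exp_pos _).le)

lemma sum_mnlP (hS : S.Nonempty) : ∑ i ∈ S, mnlP a θ S i = 1 := by
  simp only [mnlP, ← Finset.sum_div]
  exact div_self (Finset.sum_pos (fun _ _ => Real.exp_pos _) hS).ne'

lemma fisher_eq (hS : S.Nonempty) :
    fisher a θ S = Abar a θ S - vecMulVec (abar a θ S) (abar a θ S) := by
  simpa [fisher, Abar, abar, eq_sub_iff_add_eq] using
    (sum_smul_vecMulVec_sub_eq (sum_mnlP a θ hS) a 0).symm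

lemma mismatch_eq (hπ : ∑ S ∈ 𝒮, π S = 1) (h𝒮 : ∀ S ∈ 𝒮, S.Nonempty) :
    mismatch a θ 𝒮 π =
      ∑ S ∈ 𝒮, π S • vecMulVec (abar a θ S - bbar a θ 𝒮 π) (abar a θ S - bbar a θ 𝒮 π) := by
  have hM : designM a θ 𝒮 π =
      Bbar a θ 𝒮 π - ∑ S ∈ 𝒮, π S • vecMulVec (abar a θ S) (abar a θ S) := by
    rw [designM, Bbar, ← Finset.sum_sub_distrib]
    exact Finset.sum_congr rfl fun S hS => by rw [fisher_eq a θ (h𝒮 S hS), smul_sub]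
  have h := sum_smul_vecMulVec_sub_eq hπ (abar a θ) 0
  simp only [sub_zero] at h
  rw [mismatch, Mhat, hM, bbar, h]
  abel

lemma mismatch_posSemidef (hπ₀ : ∀ S ∈ 𝒮, 0 ≤ π S) (hπ : ∑ S ∈ 𝒮, π S = 1)
    (h𝒮 : ∀ S ∈ 𝒮, S.Nonempty) : (mismatch a θ 𝒮 π).PosSemidef := by
  rw [mismatch_eq a θ hπ h𝒮]
  exact posSemidef_sum_smul_vecMulVec hπ₀ _

lemma Mhat_posDef (hπ₀ : ∀ S ∈ 𝒮, 0 ≤ π S) (hπ : ∑ S ∈ 𝒮, π S = 1)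
    (h𝒮 : ∀ S ∈ 𝒮, S.Nonempty) (hM : (designM a θ 𝒮 π).PosDef) : (Mhat a θ 𝒮 π).PosDef := by
  rw [show Mhat a θ 𝒮 π = designM a θ 𝒮 π + mismatch a θ 𝒮 π by rw [mismatch]; abel]
  exact hM.add_posSemidef (mismatch_posSemidef a θ hπ₀ hπ h𝒮)

lemma liftedFeat_dotProduct_snoc (i : Fin N) (z : Fin d → ℝ) (c : ℝ) :
    liftedFeat a i ⬝ᵥ Fin.snoc z c = a i ⬝ᵥ z + c := by
  rw [liftedFeat, Fin.snoc_dotProduct_snoc, one_mul]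

lemma liftedI_mulVec_snoc (hS : S.Nonempty) (z : Fin d → ℝ) (c : ℝ) :
    liftedI a θ S *ᵥ Fin.snoc z c =
      Fin.snoc (Abar a θ S *ᵥ z + c • abar a θ S) (abar a θ S ⬝ᵥ z + c) := by
  have hterm : ∀ i, (mnlP a θ S i • vecMulVec (liftedFeat a i) (liftedFeat a i)) *ᵥ
      Fin.snoc z c = Fin.snoc (mnlP a θ S i • (vecMulVec (a i) (a i) *ᵥ z) + c • mnlP a θ S i • a i)
        (mnlP a θ S i * (a i ⬝ᵥ z) + c * mnlP a θ S i) := fun i => by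
    rw [smul_mulVec, vecMulVec_mulVec, op_smul_eq_smul, liftedFeat_dotProduct_snoc, liftedFeat,
      smul_smul, Fin.smul_snoc, vecMulVec_mulVec, op_smul_eq_smul]
    congr 1
    · module
    · ring
  simp only [liftedI, sum_mulVec, hterm, Fin.sum_snoc_eq_snoc_sum, Finset.sum_add_distrib,
    ← Finset.smul_sum, ← Finset.mul_sum, sum_mnlP a θ hS, Abar, abar, smul_mulVec,
    sum_dotProduct, smul_dotProduct, smul_eq_mul, mul_one]

lemma liftedM_mulVec_snoc (hπ : ∑ S ∈ 𝒮, π S = 1) (h𝒮 : ∀ S ∈ 𝒮, S.Nonempty)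
    (z : Fin d → ℝ) (c : ℝ) :
    liftedM a θ 𝒮 π *ᵥ Fin.snoc z c =
      Fin.snoc (Mhat a θ 𝒮 π *ᵥ z + (bbar a θ 𝒮 π ⬝ᵥ z + c) • bbar a θ 𝒮 π)
        (bbar a θ 𝒮 π ⬝ᵥ z + c) := by
  rw [liftedM, sum_mulVec, Finset.sum_congr rfl fun S hS => by
    rw [smul_mulVec, liftedI_mulVec_snoc a θ (h𝒮 S hS), Fin.smul_snoc]]
  rw [Fin.sum_snoc_eq_snoc_sum]
  congr 1
  · rw [Mhat, sub_mulVec, vecMulVec_mulVec, op_smul_eq_smul, Bbar, sum_mulVec, bbar]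
    simp only [smul_add, Finset.sum_add_distrib, smul_mulVec, smul_comm _ c, ← Finset.smul_sum]
    module
  · simp only [bbar, mul_add, Finset.sum_add_distrib, ← Finset.sum_mul, hπ, sum_dotProduct,
      smul_dotProduct, smul_eq_mul, one_mul]

lemma liftedM_posSemidef (hπ₀ : ∀ S ∈ 𝒮, 0 ≤ π S) : (liftedM a θ 𝒮 π).PosSemidef :=
  posSemidef_sum 𝒮 fun S hS =>
    (posSemidef_sum_smul_vecMulVec (fun i _ => mnlP_nonneg a θ S i) _).smul (hπ₀ S hS)

lemma liftedM_posDef (hπ₀ : ∀ S ∈ 𝒮, 0 ≤ π S) (hπ : ∑ S ∈ 𝒮, π S = 1)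
    (h𝒮 : ∀ S ∈ 𝒮, S.Nonempty) (hM : (designM a θ 𝒮 π).PosDef) : (liftedM a θ 𝒮 π).PosDef :=
  posDef_of_mulVec_snoc (liftedM_posSemidef a θ hπ₀).isHermitian
    (Mhat_posDef a θ hπ₀ hπ h𝒮 hM) (liftedM_mulVec_snoc a θ hπ h𝒮)

lemma liftedFeat_dotProduct_liftedM_inv_mulVec (hπ₀ : ∀ S ∈ 𝒮, 0 ≤ π S)
    (hπ : ∑ S ∈ 𝒮, π S = 1) (h𝒮 : ∀ S ∈ 𝒮, S.Nonempty) (hM : (designM a θ 𝒮 π).PosDef)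
    (i : Fin N) :
    liftedFeat a i ⬝ᵥ (liftedM a θ 𝒮 π)⁻¹ *ᵥ liftedFeat a i =
      1 + (a i - bbar a θ 𝒮 π) ⬝ᵥ (Mhat a θ 𝒮 π)⁻¹ *ᵥ (a i - bbar a θ 𝒮 π) :=
  snoc_one_dotProduct_inv_mulVec (liftedM_posDef a θ hπ₀ hπ h𝒮 hM).det_pos.ne'.isUnit
    (Mhat_posDef a θ hπ₀ hπ h𝒮 hM).det_pos.ne'.isUnit (liftedM_mulVec_snoc a θ hπ h𝒮) (a i)

lemma dotProduct_designM_inv_mulVec_le (hπ₀ : ∀ S ∈ 𝒮, 0 ≤ π S) (hπ : ∑ S ∈ 𝒮, π S = 1)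
    (h𝒮 : ∀ S ∈ 𝒮, S.Nonempty) (hM : (designM a θ 𝒮 π).PosDef) {εl : ℝ} (hεl : 0 ≤ εl)
    (hmis : (εl • designM a θ 𝒮 π - mismatch a θ 𝒮 π).PosSemidef) (u : Fin d → ℝ) :
    u ⬝ᵥ (designM a θ 𝒮 π)⁻¹ *ᵥ u ≤ (1 + εl) * (u ⬝ᵥ (Mhat a θ 𝒮 π)⁻¹ *ᵥ u) := by
  have hc : 0 < 1 + εl := by linarith
  have hsub : ((1 + εl) • designM a θ 𝒮 π - Mhat a θ 𝒮 π).PosSemidef := by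
    convert hmis using 1
    rw [mismatch]
    module
  have h := (hM.smul hc).dotProduct_inv_mulVec_le_of_posSemidef_sub
    (Mhat_posDef a θ hπ₀ hπ h𝒮 hM) hsub u
  have := invertibleOfNonzero hc.ne'
  rw [Matrix.inv_smul _ _ hM.det_pos.ne'.isUnit, invOf_eq_inv, smul_mulVec, dotProduct_smul,
    smul_eq_mul, inv_mul_le_iff₀ hc] at h
  exact h

theorem trace_designM_inv_mul_fisher_le (hπ₀ : ∀ S ∈ 𝒮, 0 ≤ π S) (hπ : ∑ S ∈ 𝒮, π S = 1)
    (h𝒮 : ∀ S ∈ 𝒮, S.Nonempty) (hM : (designM a θ 𝒮 π).PosDef) {εl : ℝ} (hεl : 0 ≤ εl)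
    (hmis : (εl • designM a θ 𝒮 π - mismatch a θ 𝒮 π).PosSemidef) {S : Finset (Fin N)}
    (hS : S.Nonempty) :
    ((designM a θ 𝒮 π)⁻¹ * fisher a θ S).trace ≤
      (1 + εl) * (((liftedM a θ 𝒮 π)⁻¹ * liftedI a θ S).trace - 1) := by
  set p := mnlP a θ S
  set Mh := Mhat a θ 𝒮 π
  calc ((designM a θ 𝒮 π)⁻¹ * fisher a θ S).trace
      = ∑ i ∈ S, p i * ((a i - abar a θ S) ⬝ᵥ (designM a θ 𝒮 π)⁻¹ *ᵥ (a i - abar a θ S)) := by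
        rw [fisher, trace_mul_sum_smul_vecMulVec]
    _ ≤ ∑ i ∈ S, p i * ((1 + εl) * ((a i - abar a θ S) ⬝ᵥ Mh⁻¹ *ᵥ (a i - abar a θ S))) := by
        gcongr with i
        · exact mnlP_nonneg a θ S i
        · exact dotProduct_designM_inv_mulVec_le a θ hπ₀ hπ h𝒮 hM hεl hmis _
    _ = (1 + εl) * ∑ i ∈ S, p i * ((a i - abar a θ S) ⬝ᵥ Mh⁻¹ *ᵥ (a i - abar a θ S)) := by
        rw [Finset.mul_sum]
        exact Finset.sum_congr rfl fun i _ => mul_left_comm _ _ _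
    _ ≤ (1 + εl) * ∑ i ∈ S, p i * ((a i - bbar a θ 𝒮 π) ⬝ᵥ Mh⁻¹ *ᵥ (a i - bbar a θ 𝒮 π)) := by
        refine mul_le_mul_of_nonneg_left ?_ (by linarith)
        exact sum_mul_dotProduct_mulVec_sub_mean_le (sum_mnlP a θ hS) a
          (Mhat_posDef a θ hπ₀ hπ h𝒮 hM).inv.posSemidef _
    _ = (1 + εl) * (((liftedM a θ 𝒮 π)⁻¹ * liftedI a θ S).trace - 1) := by
        rw [liftedI, trace_mul_sum_smul_vecMulVec]
        simp only [liftedFeat_dotProduct_liftedM_inv_mulVec a θ hπ₀ hπ h𝒮 hM, mul_add, mul_one,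
          Finset.sum_add_distrib, sum_mnlP a θ hS, Mh, p]
        ring

end MNL

/-- Lifted Frank–Wolfe guarantee: if the lifted G-objective of `π` is at most
`(1+ε)(d+1)` and the design mismatch satisfies `Δ_{θ₀}(π) ⪯ ε_lift · M_{θ₀}(π)`, then
`g_{θ₀}(π) ≤ (1+ε_lift)((1+ε)d + ε) ≤ 2(1+ε_lift)(1+ε)d`. -/
theorem lifted_fw_guarantee {N d : ℕ} (hd : 1 ≤ d) (a : Fin N → Fin d → ℝ) (θ₀ : Fin d → ℝ)
    (𝒮 : Finset (Finset (Fin N))) (h𝒮 : ∀ S ∈ 𝒮, 2 ≤ S.card)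
    (π : Finset (Fin N) → ℝ) (hπ : IsDesign 𝒮 π)
    (hM : (designM a θ₀ 𝒮 π).PosDef)
    (ε εlift : ℝ) (hε : 0 ≤ ε) (hεlift : 0 ≤ εlift)
    (hg : gLift a θ₀ 𝒮 π ≤ (1 + ε) * (d + 1))
    (hmis : (εlift • designM a θ₀ 𝒮 π - mismatch a θ₀ 𝒮 π).PosSemidef) :
    gObj a θ₀ 𝒮 π ≤ (1 + εlift) * ((1 + ε) * d + ε) ∧
      (1 + εlift) * ((1 + ε) * d + ε) ≤ 2 * (1 + εlift) * (1 + ε) * d := by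
  obtain ⟨hπ₀, -, hπ⟩ := hπ
  have hne : ∀ S ∈ 𝒮, S.Nonempty := fun S hS => Finset.card_pos.mp (by linarith [h𝒮 S hS])
  have h𝒮ne : 𝒮.Nonempty := Finset.nonempty_of_sum_ne_zero (by rw [hπ]; exact one_ne_zero)
  have hd' : (1 : ℝ) ≤ d := by exact_mod_cast hd
  refine ⟨csSup_le ((Finset.coe_nonempty.mpr h𝒮ne).image _) ?_, ?_⟩
  · rintro _ ⟨S, hS, rfl⟩
    have hlift : ((liftedM a θ₀ 𝒮 π)⁻¹ * liftedI a θ₀ S).trace ≤ (1 + ε) * (d + 1) :=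
      (le_csSup ((𝒮.finite_toSet.image _).bddAbove) ⟨S, hS, rfl⟩).trans hg
    calc ((designM a θ₀ 𝒮 π)⁻¹ * fisher a θ₀ S).trace
        ≤ (1 + εlift) * (((liftedM a θ₀ 𝒮 π)⁻¹ * liftedI a θ₀ S).trace - 1) :=
          trace_designM_inv_mul_fisher_le a θ₀ (fun S _ => hπ₀ S) hπ hne hM hεlift hmis
            (hne S hS)
      _ ≤ (1 + εlift) * ((1 + ε) * (d + 1) - 1) := by gcongr
      _ = (1 + εlift) * ((1 + ε) * d + ε) := by ring
  · nlinarith [mul_nonneg (by linarith : (0 : ℝ) ≤ 1 + εlift)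
      (add_nonneg (by linarith : (0 : ℝ) ≤ d) (mul_nonneg hε (by linarith : (0 : ℝ) ≤ d - 1)))]

end
end

section
/- Fix θ₀ ∈ ℝ^d and a design π over 𝒮 such that M̂ := M̂_{θ₀}(π) is invertible. Then M̃ := M̃_{θ₀}(π) is invertible and, for every assortment S ∈ 𝒮, tr(M̃⁻¹ Ĩ_{θ₀}(S)) = 1 + tr(M̂⁻¹ I_{θ₀}(S)) + (ā_{θ₀}(S) − b̄_{θ₀}(π))ᵀ M̂⁻¹ (ā_{θ₀}(S) − b̄_{θ₀}(π)). In particular, tr(M̃⁻¹ Ĩ_{θ₀}(S)) − 1 ≥ tr(M̂⁻¹ I_{θ₀}(S)) for every S ∈ 𝒮. -/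
open Matrix

noncomputable section

namespace LTIaux

variable {N d : ℕ}

/-! ### Small matrix helper lemmas -/

def colM {d : ℕ} (u : Fin d → ℝ) : Matrix (Fin d) (Fin 1) ℝ := Matrix.of fun i _ => u i
def rowM {d : ℕ} (u : Fin d → ℝ) : Matrix (Fin 1) (Fin d) ℝ := Matrix.of fun _ j => u j

lemma colM_mul_rowM (u v : Fin d → ℝ) : colM u * rowM v = vecMulVec u v := by
  ext i j; simp [colM, rowM, mul_apply, vecMulVec_apply]

lemma rowM_mul_colM (u v : Fin d → ℝ) :
    rowM u * colM v = (u ⬝ᵥ v) • (1 : Matrix (Fin 1) (Fin 1) ℝ) := by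
  ext i j
  fin_cases i; fin_cases j
  simp [colM, rowM, mul_apply, dotProduct]

lemma mul_colM {e : ℕ} (A : Matrix (Fin e) (Fin d) ℝ) (u : Fin d → ℝ) :
    A * colM u = colM (A *ᵥ u) := by
  ext i j; simp [colM, mul_apply, mulVec, dotProduct]

lemma rowM_mul {e : ℕ} (u : Fin d → ℝ) (A : Matrix (Fin d) (Fin e) ℝ) :
    rowM u * A = rowM (u ᵥ* A) := by
  ext i j; simp [rowM, mul_apply, vecMul, dotProduct]

lemma vecMulVec_mul' (u v : Fin d → ℝ) (A : Matrix (Fin d) (Fin d) ℝ) :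
    vecMulVec u v * A = vecMulVec u (v ᵥ* A) := by
  rw [← colM_mul_rowM u v, Matrix.mul_assoc, rowM_mul, colM_mul_rowM]

lemma mul_vecMulVec' (A : Matrix (Fin d) (Fin d) ℝ) (u v : Fin d → ℝ) :
    A * vecMulVec u v = vecMulVec (A *ᵥ u) v := by
  rw [← colM_mul_rowM u v, ← Matrix.mul_assoc, mul_colM, colM_mul_rowM]

lemma vecMulVec_mulVec' (u v w : Fin d → ℝ) :
    vecMulVec u v *ᵥ w = (v ⬝ᵥ w) • u := by
  ext i
  simp only [mulVec, dotProduct, vecMulVec_apply, Pi.smul_apply, smul_eq_mul, Finset.sum_mul]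
  exact Finset.sum_congr rfl fun j _ => by ring

lemma trace_vecMulVec' (u v : Fin d → ℝ) : (vecMulVec u v).trace = u ⬝ᵥ v := by
  simp [trace, vecMulVec_apply, dotProduct, diag]

lemma trace_fromBlocks' (A : Matrix (Fin d) (Fin d) ℝ)
    (B : Matrix (Fin d) (Fin 1) ℝ) (C : Matrix (Fin 1) (Fin d) ℝ)
    (D : Matrix (Fin 1) (Fin 1) ℝ) :
    (fromBlocks A B C D : Matrix (Fin d ⊕ Fin 1) (Fin d ⊕ Fin 1) ℝ).trace
      = A.trace + D.trace := by
  simp [trace, diag, Fintype.sum_sum_type]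

lemma trace_submatrix_equiv' {n m : Type*} [Fintype n] [Fintype m] [DecidableEq n]
    [DecidableEq m] (e : n ≃ m) (A : Matrix m m ℝ) : (A.submatrix e e).trace = A.trace := by
  simp only [trace, diag, submatrix_apply]
  exact Equiv.sum_comp e fun j => A j j

lemma sum_mulVec' {ι : Type*} (t : Finset ι) (f : ι → Matrix (Fin d) (Fin d) ℝ)
    (u : Fin d → ℝ) : (∑ i ∈ t, f i) *ᵥ u = ∑ i ∈ t, f i *ᵥ u := by
  ext j
  simp only [mulVec, dotProduct, Matrix.sum_apply, Finset.sum_apply, Finset.sum_mul]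
  exact Finset.sum_comm

lemma dotProduct_sum' {ι : Type*} (t : Finset ι) (u : Fin d → ℝ) (f : ι → Fin d → ℝ) :
    u ⬝ᵥ (∑ i ∈ t, f i) = ∑ i ∈ t, u ⬝ᵥ f i := by
  simp only [dotProduct, Finset.sum_apply, Finset.mul_sum]
  exact Finset.sum_comm

/-! ### Scalar variance lemmas -/

lemma sum_center {ι : Type*} (t : Finset ι) (w f g : ι → ℝ) (h1 : ∑ i ∈ t, w i = 1) :
    ∑ i ∈ t, w i * ((f i - ∑ j ∈ t, w j * f j) * (g i - ∑ j ∈ t, w j * g j))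
      = (∑ i ∈ t, w i * (f i * g i)) - (∑ j ∈ t, w j * f j) * (∑ j ∈ t, w j * g j) := by
  set mf := ∑ j ∈ t, w j * f j with hmf
  set mg := ∑ j ∈ t, w j * g j with hmg
  have h2 : ∀ i ∈ t, w i * ((f i - mf) * (g i - mg))
      = w i * (f i * g i) - mf * (w i * g i) - mg * (w i * f i) + mf * mg * w i :=
    fun i _ => by ring
  rw [Finset.sum_congr rfl h2, Finset.sum_add_distrib, Finset.sum_sub_distrib,
    Finset.sum_sub_distrib, ← Finset.mul_sum, ← Finset.mul_sum, ← Finset.mul_sum,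
    h1, ← hmf, ← hmg]
  ring

lemma var_nonneg {ι : Type*} (t : Finset ι) (w y : ι → ℝ) (hw : ∀ i ∈ t, 0 ≤ w i)
    (h1 : ∑ i ∈ t, w i = 1) : (∑ i ∈ t, w i * y i) ^ 2 ≤ ∑ i ∈ t, w i * y i ^ 2 := by
  have key := sum_center t w y y h1
  have h0 : 0 ≤ ∑ i ∈ t, w i * ((y i - ∑ j ∈ t, w j * y j) * (y i - ∑ j ∈ t, w j * y j)) :=
    Finset.sum_nonneg fun i hi => mul_nonneg (hw i hi) (mul_self_nonneg _)
  rw [key] at h0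
  have : ∑ i ∈ t, w i * y i ^ 2 = ∑ i ∈ t, w i * (y i * y i) :=
    Finset.sum_congr rfl fun i _ => by ring
  nlinarith [h0]

/-! ### MNL basics -/

lemma mnlP_nonneg (a : Fin N → Fin d → ℝ) (θ : Fin d → ℝ) (S : Finset (Fin N))
    (i : Fin N) : 0 ≤ mnlP a θ S i :=
  div_nonneg (Real.exp_pos _).le (Finset.sum_nonneg fun _ _ => (Real.exp_pos _).le)

lemma mnlP_sum_one (a : Fin N → Fin d → ℝ) (θ : Fin d → ℝ) (S : Finset (Fin N))
    (hS : S.Nonempty) : ∑ i ∈ S, mnlP a θ S i = 1 := by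
  have hE : 0 < ∑ j ∈ S, Real.exp (a j ⬝ᵥ θ) :=
    Finset.sum_pos (fun _ _ => Real.exp_pos _) hS
  unfold mnlP
  rw [← Finset.sum_div, div_self hE.ne']

lemma abar_apply (a : Fin N → Fin d → ℝ) (θ : Fin d → ℝ) (S : Finset (Fin N)) (r : Fin d) :
    abar a θ S r = ∑ i ∈ S, mnlP a θ S i * a i r := by
  simp [abar, Finset.sum_apply]

lemma fisher_eq (a : Fin N → Fin d → ℝ) (θ : Fin d → ℝ) (S : Finset (Fin N))
    (h1 : ∑ i ∈ S, mnlP a θ S i = 1) :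
    fisher a θ S = Abar a θ S - vecMulVec (abar a θ S) (abar a θ S) := by
  ext r t
  simp only [fisher, Abar, Matrix.sum_apply, Matrix.smul_apply, Matrix.sub_apply,
    vecMulVec_apply, smul_eq_mul, Pi.sub_apply]
  have := sum_center S (mnlP a θ S) (fun i => a i r) (fun i => a i t) h1
  rw [← abar_apply, ← abar_apply] at this
  rw [this]

lemma liftedFeat_castAdd (a : Fin N → Fin d → ℝ) (i : Fin N) (j : Fin d) :
    liftedFeat a i (finSumFinEquiv (Sum.inl j)) = a i j := by
  simp [liftedFeat, finSumFinEquiv_apply_left]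
  exact Fin.snoc_castSucc _ _ _

lemma liftedFeat_last (a : Fin N → Fin d → ℝ) (i : Fin N) (k : Fin 1) :
    liftedFeat a i (finSumFinEquiv (Sum.inr k)) = 1 := by
  have : (Fin.natAdd d k : Fin (d + 1)) = Fin.last d := by
    ext; simp [Fin.natAdd, Fin.last, Fin.fin_one_eq_zero k]
  simp [liftedFeat, finSumFinEquiv_apply_right, this]

end LTIaux

namespace LTIaux

lemma liftedI_block (a : Fin N → Fin d → ℝ) (θ : Fin d → ℝ) (S : Finset (Fin N))
    (h1 : ∑ i ∈ S, mnlP a θ S i = 1) :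
    (liftedI a θ S).submatrix (finSumFinEquiv (m := d) (n := 1))
        (finSumFinEquiv (m := d) (n := 1))
      = fromBlocks (Abar a θ S) (colM (abar a θ S)) (rowM (abar a θ S)) 1 := by
  ext s t
  rcases s with s | s <;> rcases t with t | t <;>
    simp only [submatrix_apply, liftedI, Matrix.sum_apply, Matrix.smul_apply,
      vecMulVec_apply, smul_eq_mul, liftedFeat_castAdd, liftedFeat_last,
      fromBlocks_apply₁₁, fromBlocks_apply₁₂, fromBlocks_apply₂₁, fromBlocks_apply₂₂,
      Abar, colM, rowM, Matrix.of_apply, mul_one, one_mul]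
  · exact (abar_apply a θ S s).symm
  · exact (abar_apply a θ S t).symm
  · rw [Subsingleton.elim s t, Matrix.one_apply_eq, h1]

lemma liftedM_block (a : Fin N → Fin d → ℝ) (θ : Fin d → ℝ) (𝒮 : Finset (Finset (Fin N)))
    (π : Finset (Fin N) → ℝ) (hπ1 : ∑ S ∈ 𝒮, π S = 1)
    (h1 : ∀ S ∈ 𝒮, ∑ i ∈ S, mnlP a θ S i = 1) :
    (liftedM a θ 𝒮 π).submatrix (finSumFinEquiv (m := d) (n := 1))
        (finSumFinEquiv (m := d) (n := 1))
      = fromBlocks (Bbar a θ 𝒮 π) (colM (bbar a θ 𝒮 π)) (rowM (bbar a θ 𝒮 π)) 1 := by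
  ext s t
  rcases s with s | s <;> rcases t with t | t <;>
    simp only [submatrix_apply, liftedM, liftedI, Matrix.sum_apply, Matrix.smul_apply,
      vecMulVec_apply, smul_eq_mul, liftedFeat_castAdd, liftedFeat_last,
      fromBlocks_apply₁₁, fromBlocks_apply₁₂, fromBlocks_apply₂₁, fromBlocks_apply₂₂,
      Bbar, Abar, colM, rowM, Matrix.of_apply, mul_one, one_mul]
  · have hb : bbar a θ 𝒮 π s = ∑ S ∈ 𝒮, π S * abar a θ S s := by
      simp [bbar, Finset.sum_apply]
    rw [hb]
    exact Finset.sum_congr rfl fun S hS => by rw [abar_apply, Finset.mul_sum]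
  · have hb : bbar a θ 𝒮 π t = ∑ S ∈ 𝒮, π S * abar a θ S t := by
      simp [bbar, Finset.sum_apply]
    rw [hb]
    exact Finset.sum_congr rfl fun S hS => by rw [abar_apply, Finset.mul_sum]
  · rw [Subsingleton.elim s t, Matrix.one_apply_eq, ← hπ1]
    exact Finset.sum_congr rfl fun S hS => by rw [h1 S hS, mul_one]

end LTIaux

namespace LTIaux

lemma colM_add (u v : Fin d → ℝ) : colM (u + v) = colM u + colM v := by
  ext i j; simp [colM]

lemma colM_neg (u : Fin d → ℝ) : colM (-u) = -colM u := by
  ext i j; simp [colM]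

lemma colM_zero : colM (0 : Fin d → ℝ) = 0 := by
  ext i j; simp [colM]

lemma abar_dot (a : Fin N → Fin d → ℝ) (θ : Fin d → ℝ) (S : Finset (Fin N)) (u : Fin d → ℝ) :
    abar a θ S ⬝ᵥ u = ∑ i ∈ S, mnlP a θ S i * (a i ⬝ᵥ u) := by
  rw [dotProduct_comm, abar, dotProduct_sum']
  exact Finset.sum_congr rfl fun i _ => by
    rw [dotProduct_smul, smul_eq_mul, dotProduct_comm]

lemma Abar_qf (a : Fin N → Fin d → ℝ) (θ : Fin d → ℝ) (S : Finset (Fin N)) (u : Fin d → ℝ) :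
    u ⬝ᵥ (Abar a θ S *ᵥ u) = ∑ i ∈ S, mnlP a θ S i * (a i ⬝ᵥ u) ^ 2 := by
  rw [Abar, sum_mulVec', dotProduct_sum']
  refine Finset.sum_congr rfl fun i _ => ?_
  rw [smul_mulVec, vecMulVec_mulVec', dotProduct_smul, dotProduct_smul,
    smul_eq_mul, smul_eq_mul, dotProduct_comm u (a i)]
  ring

lemma Mhat_qf_nonneg (a : Fin N → Fin d → ℝ) (θ : Fin d → ℝ) (𝒮 : Finset (Finset (Fin N)))
    (π : Finset (Fin N) → ℝ) (hπ0 : ∀ S, 0 ≤ π S) (hπ1 : ∑ S ∈ 𝒮, π S = 1)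
    (hne : ∀ S ∈ 𝒮, S.Nonempty) (u : Fin d → ℝ) :
    0 ≤ u ⬝ᵥ (Mhat a θ 𝒮 π *ᵥ u) := by
  have hbu : bbar a θ 𝒮 π ⬝ᵥ u = ∑ S ∈ 𝒮, π S * (abar a θ S ⬝ᵥ u) := by
    rw [dotProduct_comm, bbar, dotProduct_sum']
    exact Finset.sum_congr rfl fun S _ => by
      rw [dotProduct_smul, smul_eq_mul, dotProduct_comm]
  have hq : u ⬝ᵥ (Mhat a θ 𝒮 π *ᵥ u)
      = (∑ S ∈ 𝒮, π S * (u ⬝ᵥ (Abar a θ S *ᵥ u)))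
        - (∑ S ∈ 𝒮, π S * (abar a θ S ⬝ᵥ u)) ^ 2 := by
    rw [Mhat, sub_mulVec, dotProduct_sub]
    congr 1
    · rw [Bbar, sum_mulVec', dotProduct_sum']
      exact Finset.sum_congr rfl fun S _ => by
        rw [smul_mulVec, dotProduct_smul, smul_eq_mul]
    · rw [vecMulVec_mulVec', dotProduct_smul, smul_eq_mul,
        dotProduct_comm u (bbar a θ 𝒮 π), hbu, sq]
  set t := 𝒮.sigma (fun S => S) with ht
  have e1 : ∑ S ∈ 𝒮, π S * (abar a θ S ⬝ᵥ u)
      = ∑ q ∈ t, (π q.1 * mnlP a θ q.1 q.2) * (a q.2 ⬝ᵥ u) := by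
    rw [ht, Finset.sum_sigma]
    refine Finset.sum_congr rfl fun S _ => ?_
    rw [abar_dot, Finset.mul_sum]
    exact Finset.sum_congr rfl fun i _ => by ring
  have e2 : ∑ S ∈ 𝒮, π S * (u ⬝ᵥ (Abar a θ S *ᵥ u))
      = ∑ q ∈ t, (π q.1 * mnlP a θ q.1 q.2) * (a q.2 ⬝ᵥ u) ^ 2 := by
    rw [ht, Finset.sum_sigma]
    refine Finset.sum_congr rfl fun S _ => ?_
    rw [Abar_qf, Finset.mul_sum]
    exact Finset.sum_congr rfl fun i _ => by ring
  have hw : ∀ q ∈ t, 0 ≤ π q.1 * mnlP a θ q.1 q.2 :=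
    fun q _ => mul_nonneg (hπ0 _) (mnlP_nonneg _ _ _ _)
  have h1 : ∑ q ∈ t, π q.1 * mnlP a θ q.1 q.2 = 1 := by
    rw [ht, Finset.sum_sigma, ← hπ1]
    refine Finset.sum_congr rfl fun S hS => ?_
      
    show ∑ i ∈ S, π S * mnlP a θ S i = π S
    rw [← Finset.mul_sum, mnlP_sum_one a θ S (hne S hS), mul_one]
  rw [hq, e1, e2]
  have := var_nonneg t (fun q => π q.1 * mnlP a θ q.1 q.2) (fun q => a q.2 ⬝ᵥ u) hw h1
  linarith

end LTIaux

/-- Block trace identity for the lifted design matrix: if `M̂_{θ₀}(π)` is invertible then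
`M̃_{θ₀}(π)` is invertible and, for every assortment `S ∈ 𝒮`,
`tr(M̃⁻¹ Ĩ(S)) = 1 + tr(M̂⁻¹ I(S)) + (ā(S) − b̄)ᵀ M̂⁻¹ (ā(S) − b̄)`; in particular
`tr(M̃⁻¹ Ĩ(S)) − 1 ≥ tr(M̂⁻¹ I(S))`. -/
theorem lifted_trace_identity {N d : ℕ} (a : Fin N → Fin d → ℝ) (θ₀ : Fin d → ℝ)
    (𝒮 : Finset (Finset (Fin N))) (h𝒮 : ∀ S ∈ 𝒮, 2 ≤ S.card)
    (π : Finset (Fin N) → ℝ) (hπ : IsDesign 𝒮 π)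
    (hMhat : IsUnit (Mhat a θ₀ 𝒮 π).det) :
    IsUnit (liftedM a θ₀ 𝒮 π).det ∧
    (∀ S ∈ 𝒮,
      ((liftedM a θ₀ 𝒮 π)⁻¹ * liftedI a θ₀ S).trace =
        1 + ((Mhat a θ₀ 𝒮 π)⁻¹ * fisher a θ₀ S).trace +
          (abar a θ₀ S - bbar a θ₀ 𝒮 π) ⬝ᵥ
            ((Mhat a θ₀ 𝒮 π)⁻¹ *ᵥ (abar a θ₀ S - bbar a θ₀ 𝒮 π))) ∧
    (∀ S ∈ 𝒮,
      ((Mhat a θ₀ 𝒮 π)⁻¹ * fisher a θ₀ S).trace ≤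
        ((liftedM a θ₀ 𝒮 π)⁻¹ * liftedI a θ₀ S).trace - 1) := by
  classical
  obtain ⟨hπ0, hπsupp, hπ1⟩ := hπ
  open LTIaux in
  have hne : ∀ S ∈ 𝒮, S.Nonempty := fun S hS =>
    Finset.card_pos.mp (lt_of_lt_of_le (by norm_num) (h𝒮 S hS))
  have hsum1 : ∀ S ∈ 𝒮, ∑ i ∈ S, mnlP a θ₀ S i = 1 :=
    fun S hS => LTIaux.mnlP_sum_one a θ₀ S (hne S hS)
  set b := bbar a θ₀ 𝒮 π with hb
  set Bb := Bbar a θ₀ 𝒮 π with hBb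
  set Mh := Mhat a θ₀ 𝒮 π with hMh
  have hMhdef : Mh = Bb - vecMulVec b b := by rw [hMh, hBb, hb]; rfl
  have hMr : Mh * Mh⁻¹ = 1 := mul_nonsing_inv _ hMhat
  set e := finSumFinEquiv (m := d) (n := 1) with he
  set G := fromBlocks Bb (LTIaux.colM b) (LTIaux.rowM b) (1 : Matrix (Fin 1) (Fin 1) ℝ)
    with hG
  have hMG : (liftedM a θ₀ 𝒮 π).submatrix e e = G :=
    LTIaux.liftedM_block a θ₀ 𝒮 π hπ1 hsum1
  have hM_eq : liftedM a θ₀ 𝒮 π = G.submatrix e.symm e.symm := by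
    rw [← hMG, submatrix_submatrix, Equiv.self_comp_symm, submatrix_id_id]
  set W := fromBlocks Mh⁻¹ (-(LTIaux.colM (Mh⁻¹ *ᵥ b))) (-(LTIaux.rowM (b ᵥ* Mh⁻¹)))
    (1 + LTIaux.rowM (b ᵥ* Mh⁻¹) * LTIaux.colM b) with hW
  have hGW : G * W = 1 := by
    rw [hG, hW, fromBlocks_multiply]
    have h11 : Bb * Mh⁻¹ + LTIaux.colM b * -LTIaux.rowM (b ᵥ* Mh⁻¹) = 1 := by
      rw [Matrix.mul_neg, LTIaux.colM_mul_rowM, ← LTIaux.vecMulVec_mul', ← sub_eq_add_neg,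
        ← Matrix.sub_mul, ← hMhdef, hMr]
    have h21 : LTIaux.rowM b * Mh⁻¹ + (1 : Matrix (Fin 1) (Fin 1) ℝ) * -LTIaux.rowM (b ᵥ* Mh⁻¹) = 0 := by
      rw [Matrix.one_mul, LTIaux.rowM_mul, ← sub_eq_add_neg, sub_self]
    have h12 : Bb * -LTIaux.colM (Mh⁻¹ *ᵥ b)
        + LTIaux.colM b * (1 + LTIaux.rowM (b ᵥ* Mh⁻¹) * LTIaux.colM b) = 0 := by
      rw [Matrix.mul_neg, LTIaux.mul_colM, Matrix.mul_add, Matrix.mul_one, ← Matrix.mul_assoc,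
        LTIaux.colM_mul_rowM, LTIaux.mul_colM, LTIaux.vecMulVec_mulVec']
      have hvec : -(Bb *ᵥ (Mh⁻¹ *ᵥ b)) + (b + ((b ᵥ* Mh⁻¹) ⬝ᵥ b) • b) = 0 := by
        have h1 : ((b ᵥ* Mh⁻¹) ⬝ᵥ b) • b = vecMulVec b b *ᵥ (Mh⁻¹ *ᵥ b) := by
          rw [LTIaux.vecMulVec_mulVec', dotProduct_mulVec]
        have h2 : Bb *ᵥ (Mh⁻¹ *ᵥ b) - vecMulVec b b *ᵥ (Mh⁻¹ *ᵥ b) = b := by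
          rw [← Matrix.sub_mulVec, ← hMhdef, mulVec_mulVec, hMr, one_mulVec]
        have h3 := sub_eq_iff_eq_add.mp h2
        rw [h1, h3]
        abel
      rw [← LTIaux.colM_neg, ← LTIaux.colM_add, ← LTIaux.colM_add, hvec, LTIaux.colM_zero]
    have h22 : LTIaux.rowM b * -LTIaux.colM (Mh⁻¹ *ᵥ b)
        + (1 : Matrix (Fin 1) (Fin 1) ℝ) * (1 + LTIaux.rowM (b ᵥ* Mh⁻¹) * LTIaux.colM b) = 1 := by
      rw [Matrix.one_mul, Matrix.mul_neg, LTIaux.rowM_mul_colM, LTIaux.rowM_mul_colM, dotProduct_mulVec]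
      abel
    rw [h11, h12, h21, h22, fromBlocks_one]
  have hdetG : IsUnit G.det := Matrix.isUnit_det_of_right_inverse hGW
  have hdetM : IsUnit (liftedM a θ₀ 𝒮 π).det := by
    rw [hM_eq, det_submatrix_equiv_self]
    exact hdetG
  have hMinv : (liftedM a θ₀ 𝒮 π)⁻¹ = W.submatrix e.symm e.symm := by
    apply inv_eq_right_inv
    rw [hM_eq, submatrix_mul_equiv, hGW, submatrix_one_equiv]
  have hpsd : ∀ u : Fin d → ℝ, 0 ≤ u ⬝ᵥ (Mh *ᵥ u) := by
    rw [hMh]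
    exact LTIaux.Mhat_qf_nonneg a θ₀ 𝒮 π hπ0 hπ1 hne
  have htrace : ∀ S ∈ 𝒮,
      ((liftedM a θ₀ 𝒮 π)⁻¹ * liftedI a θ₀ S).trace =
        1 + (Mh⁻¹ * fisher a θ₀ S).trace +
          (abar a θ₀ S - b) ⬝ᵥ (Mh⁻¹ *ᵥ (abar a θ₀ S - b)) := by
    intro S hS
    have hIS : liftedI a θ₀ S = (fromBlocks (Abar a θ₀ S) (LTIaux.colM (abar a θ₀ S))
        (LTIaux.rowM (abar a θ₀ S)) 1).submatrix e.symm e.symm := by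
      rw [← LTIaux.liftedI_block a θ₀ S (hsum1 S hS), ← he, submatrix_submatrix,
        Equiv.self_comp_symm, submatrix_id_id]
    rw [hMinv, hIS, submatrix_mul_equiv, LTIaux.trace_submatrix_equiv', hW,
      fromBlocks_multiply, LTIaux.trace_fromBlocks']
    -- the two diagonal block traces
    have t11 : (Mh⁻¹ * Abar a θ₀ S + -LTIaux.colM (Mh⁻¹ *ᵥ b) * LTIaux.rowM (abar a θ₀ S)).trace
        = (Mh⁻¹ * Abar a θ₀ S).trace - (Mh⁻¹ *ᵥ b) ⬝ᵥ abar a θ₀ S := by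
      rw [trace_add, Matrix.neg_mul, LTIaux.colM_mul_rowM, trace_neg, LTIaux.trace_vecMulVec',
        sub_eq_add_neg]
    have t22 : (-LTIaux.rowM (b ᵥ* Mh⁻¹) * LTIaux.colM (abar a θ₀ S)
        + (1 + LTIaux.rowM (b ᵥ* Mh⁻¹) * LTIaux.colM b) * 1).trace
        = -((b ᵥ* Mh⁻¹) ⬝ᵥ abar a θ₀ S) + (1 + (b ᵥ* Mh⁻¹) ⬝ᵥ b) := by
      rw [mul_one, Matrix.neg_mul, LTIaux.rowM_mul_colM, LTIaux.rowM_mul_colM, trace_add,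
        trace_neg, trace_smul, trace_add, trace_smul, trace_one]
      simp
    rw [t11, t22]
    -- right-hand side
    rw [LTIaux.fisher_eq a θ₀ S (hsum1 S hS), mul_sub, trace_sub, LTIaux.mul_vecMulVec',
      LTIaux.trace_vecMulVec', mulVec_sub, dotProduct_sub, sub_dotProduct, sub_dotProduct]
    have c1 : (Mh⁻¹ *ᵥ b) ⬝ᵥ abar a θ₀ S = abar a θ₀ S ⬝ᵥ (Mh⁻¹ *ᵥ b) := dotProduct_comm _ _
    have c2 : (b ᵥ* Mh⁻¹) ⬝ᵥ abar a θ₀ S = b ⬝ᵥ (Mh⁻¹ *ᵥ abar a θ₀ S) :=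
      (dotProduct_mulVec _ _ _).symm
    have c3 : (b ᵥ* Mh⁻¹) ⬝ᵥ b = b ⬝ᵥ (Mh⁻¹ *ᵥ b) := (dotProduct_mulVec _ _ _).symm
    have c4 : (Mh⁻¹ *ᵥ abar a θ₀ S) ⬝ᵥ abar a θ₀ S
        = abar a θ₀ S ⬝ᵥ (Mh⁻¹ *ᵥ abar a θ₀ S) := dotProduct_comm _ _
    rw [c1, c2, c3, c4]
    ring
  refine ⟨hdetM, htrace, fun S hS => ?_⟩
  rw [htrace S hS]
  have hq : 0 ≤ (abar a θ₀ S - b) ⬝ᵥ (Mh⁻¹ *ᵥ (abar a θ₀ S - b)) := by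
    set v := abar a θ₀ S - b with hv
    have hMv : Mh *ᵥ (Mh⁻¹ *ᵥ v) = v := by
      rw [mulVec_mulVec, hMr, one_mulVec]
    calc (0:ℝ) ≤ (Mh⁻¹ *ᵥ v) ⬝ᵥ (Mh *ᵥ (Mh⁻¹ *ᵥ v)) := hpsd _
    _ = v ⬝ᵥ (Mh⁻¹ *ᵥ v) := by rw [hMv, dotProduct_comm]
  linarith

end
end

section
/- Under the MNL model with outside option at θ₀ ∈ ℝ^d, write w_i := exp(a_iᵀθ₀) and, for a design π over 𝒮, define M(π) := E_{S∼π}[I_{θ₀}(S)] and Δ(π) := E_{S∼π}[ā_{θ₀}(S) ā_{θ₀}(S)ᵀ] − E_{S∼π}[ā_{θ₀}(S)] E_{S∼π}[ā_{θ₀}(S)]ᵀ. Then Δ(π) ⪯ (max_{S ∈ supp(π)} Σ_{j∈S} w_j) · M(π) in the Loewner order. In particular, if |S| ≤ K for all S ∈ 𝒮 and a_jᵀθ₀ ≤ B for all j ∈ [N], then the smallest ε ≥ 0 with Δ(π) ⪯ ε · M(π) satisfies ε ≤ K e^B. -/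
/-!
With `w_i = exp(a_iᵀθ₀)`, `W = Σ_{i∈S} w_i`, `p_i = w_i / (1 + W)` and `y_i = a_iᵀx`, the
Cauchy–Schwarz inequality `(Σ w_i y_i)² ≤ W · Σ w_i y_i²` rearranges to
`(āᵀx)² ≤ W · xᵀ I(S) x`; it also shows `I(S) ⪰ 0`. Hence
`xᵀΔx ≤ E_π[(āᵀx)²] ≤ E_π[W(S) · xᵀ I(S) x] ≤ (max_{supp π} W) · xᵀ M x`,
and `W(S) ≤ |S| e^B ≤ K e^B` gives the bound on the least admissible `ε`.
-/

open Matrix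

noncomputable section

/-- MNL choice probability with outside option. -/
def mnlPOut {N d : ℕ} (a : Fin N → Fin d → ℝ) (θ : Fin d → ℝ) (S : Finset (Fin N)) (i : Fin N) :
    ℝ :=
  Real.exp (a i ⬝ᵥ θ) / (1 + ∑ j ∈ S, Real.exp (a j ⬝ᵥ θ))

/-- Mean feature vector under the outside-option MNL choice probabilities. -/
def abarOut {N d : ℕ} (a : Fin N → Fin d → ℝ) (θ : Fin d → ℝ) (S : Finset (Fin N)) :
    Fin d → ℝ :=
  ∑ i ∈ S, mnlPOut a θ S i • a i

/-- Uncentered second-moment matrix under the outside-option MNL model. -/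
def AbarOut {N d : ℕ} (a : Fin N → Fin d → ℝ) (θ : Fin d → ℝ) (S : Finset (Fin N)) :
    Matrix (Fin d) (Fin d) ℝ :=
  ∑ i ∈ S, mnlPOut a θ S i • vecMulVec (a i) (a i)

/-- Fisher information matrix under the outside-option MNL model. -/
def fisherOut {N d : ℕ} (a : Fin N → Fin d → ℝ) (θ : Fin d → ℝ) (S : Finset (Fin N)) :
    Matrix (Fin d) (Fin d) ℝ :=
  AbarOut a θ S - vecMulVec (abarOut a θ S) (abarOut a θ S)

/-- Expected Fisher information matrix of a design, outside-option model. -/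
def designMOut {N d : ℕ} (a : Fin N → Fin d → ℝ) (θ : Fin d → ℝ)
    (𝒮 : Finset (Finset (Fin N))) (π : Finset (Fin N) → ℝ) : Matrix (Fin d) (Fin d) ℝ :=
  ∑ S ∈ 𝒮, π S • fisherOut a θ S

/-- Mismatch matrix `Δ(π) = E_π[ā āᵀ] − (E_π ā)(E_π ā)ᵀ`, outside-option model. -/
def mismatchOut {N d : ℕ} (a : Fin N → Fin d → ℝ) (θ : Fin d → ℝ)
    (𝒮 : Finset (Finset (Fin N))) (π : Finset (Fin N) → ℝ) : Matrix (Fin d) (Fin d) ℝ :=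
  (∑ S ∈ 𝒮, π S • vecMulVec (abarOut a θ S) (abarOut a θ S)) -
    vecMulVec (∑ S ∈ 𝒮, π S • abarOut a θ S) (∑ S ∈ 𝒮, π S • abarOut a θ S)

open Finset

section QuadraticForm

variable {n ι R : Type*}

lemma dotProduct_vecMulVec_self_mulVec [Fintype n] [CommSemiring R] (v x : n → R) :
    x ⬝ᵥ (vecMulVec v v *ᵥ x) = (v ⬝ᵥ x) ^ 2 := by
  simp only [vecMulVec, mulVec, dotProduct, of_apply, mul_sum, sum_mul, sq]
  rw [sum_comm]
  exact sum_congr rfl fun i _ => sum_congr rfl fun j _ => by ring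

lemma dotProduct_sum_smul_mulVec [Fintype n] [CommSemiring R] (s : Finset ι) (c : ι → R)
    (M : ι → Matrix n n R) (x : n → R) :
    x ⬝ᵥ ((∑ i ∈ s, c i • M i) *ᵥ x) = ∑ i ∈ s, c i * (x ⬝ᵥ (M i *ᵥ x)) := by
  simp only [sum_mulVec, dotProduct_sum, smul_mulVec, dotProduct_smul, smul_eq_mul]

lemma sum_smul_dotProduct [Fintype n] [CommSemiring R] (s : Finset ι) (c : ι → R)
    (v : ι → n → R) (x : n → R) : (∑ i ∈ s, c i • v i) ⬝ᵥ x = ∑ i ∈ s, c i * (v i ⬝ᵥ x) := by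
  simp only [sum_dotProduct, smul_dotProduct, smul_eq_mul]

variable [CommSemiring R] [StarRing R] [TrivialStar R]

lemma isHermitian_vecMulVec_self (v : n → R) : (vecMulVec v v).IsHermitian :=
  IsHermitian.ext fun i j => by simp [vecMulVec_apply, mul_comm]

lemma isHermitian_sum_smul (s : Finset ι) (c : ι → R) {M : ι → Matrix n n R}
    (hM : ∀ i ∈ s, (M i).IsHermitian) : (∑ i ∈ s, c i • M i).IsHermitian :=
  isSelfAdjoint_sum s fun i hi => (hM i hi).smul (IsSelfAdjoint.all _)

end QuadraticForm

lemma one_add_sum_mul_sq_sum_div_le {ι : Type*} (s : Finset ι) (w y : ι → ℝ)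
    (hw : ∀ i ∈ s, 0 ≤ w i) :
    (1 + ∑ i ∈ s, w i) * (∑ i ∈ s, w i / (1 + ∑ j ∈ s, w j) * y i) ^ 2 ≤
      (∑ i ∈ s, w i) * ∑ i ∈ s, w i / (1 + ∑ j ∈ s, w j) * y i ^ 2 := by
  set W := ∑ i ∈ s, w i
  have hW : 0 < 1 + W := by linarith [sum_nonneg hw]
  have hcs : (∑ i ∈ s, w i * y i) ^ 2 ≤ W * ∑ i ∈ s, w i * y i ^ 2 :=
    sum_sq_le_sum_mul_sum_of_sq_le_mul s hw (fun i hi => mul_nonneg (hw i hi) (sq_nonneg _))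
      fun i _ => le_of_eq (by ring)
  simp only [div_mul_eq_mul_div, ← sum_div]
  rw [div_pow, sq (1 + W), ← div_div, mul_div_cancel₀ _ hW.ne', mul_div_assoc']
  exact div_le_div_of_nonneg_right hcs hW.le

section Model

variable {N d : ℕ} (a : Fin N → Fin d → ℝ) (θ : Fin d → ℝ)

lemma abarOut_dotProduct (S : Finset (Fin N)) (x : Fin d → ℝ) :
    abarOut a θ S ⬝ᵥ x = ∑ i ∈ S, mnlPOut a θ S i * (a i ⬝ᵥ x) :=
  sum_smul_dotProduct ..

lemma dotProduct_fisherOut_mulVec (S : Finset (Fin N)) (x : Fin d → ℝ) :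
    x ⬝ᵥ (fisherOut a θ S *ᵥ x) =
      ∑ i ∈ S, mnlPOut a θ S i * (a i ⬝ᵥ x) ^ 2 - (abarOut a θ S ⬝ᵥ x) ^ 2 := by
  simp only [fisherOut, AbarOut, sub_mulVec, dotProduct_sub, dotProduct_sum_smul_mulVec,
    dotProduct_vecMulVec_self_mulVec]

lemma one_add_mul_sq_abarOut_dotProduct_le (S : Finset (Fin N)) (x : Fin d → ℝ) :
    (1 + ∑ j ∈ S, Real.exp (a j ⬝ᵥ θ)) * (abarOut a θ S ⬝ᵥ x) ^ 2 ≤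
      (∑ j ∈ S, Real.exp (a j ⬝ᵥ θ)) * ∑ i ∈ S, mnlPOut a θ S i * (a i ⬝ᵥ x) ^ 2 := by
  rw [abarOut_dotProduct]
  exact one_add_sum_mul_sq_sum_div_le S _ _ fun i _ => (Real.exp_pos _).le

lemma sq_abarOut_dotProduct_le (S : Finset (Fin N)) (x : Fin d → ℝ) :
    (abarOut a θ S ⬝ᵥ x) ^ 2 ≤
      (∑ j ∈ S, Real.exp (a j ⬝ᵥ θ)) * (x ⬝ᵥ (fisherOut a θ S *ᵥ x)) := by
  rw [dotProduct_fisherOut_mulVec]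
  linarith [one_add_mul_sq_abarOut_dotProduct_le a θ S x]

lemma dotProduct_fisherOut_mulVec_nonneg (S : Finset (Fin N)) (x : Fin d → ℝ) :
    0 ≤ x ⬝ᵥ (fisherOut a θ S *ᵥ x) := by
  have hW : 0 ≤ ∑ j ∈ S, Real.exp (a j ⬝ᵥ θ) := sum_nonneg fun j _ => (Real.exp_pos _).le
  have hQ : 0 ≤ ∑ i ∈ S, mnlPOut a θ S i * (a i ⬝ᵥ x) ^ 2 :=
    sum_nonneg fun i _ => mul_nonneg (div_nonneg (Real.exp_pos _).le (by linarith))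
      (sq_nonneg _)
  rw [dotProduct_fisherOut_mulVec]
  nlinarith [one_add_mul_sq_abarOut_dotProduct_le a θ S x]

lemma isHermitian_fisherOut (S : Finset (Fin N)) : (fisherOut a θ S).IsHermitian :=
  (isHermitian_sum_smul S _ fun i _ => isHermitian_vecMulVec_self (a i)).sub
    (isHermitian_vecMulVec_self _)

variable (𝒮 : Finset (Finset (Fin N))) (π : Finset (Fin N) → ℝ)

lemma dotProduct_mismatchOut_mulVec (x : Fin d → ℝ) :
    x ⬝ᵥ (mismatchOut a θ 𝒮 π *ᵥ x) =
      ∑ S ∈ 𝒮, π S * (abarOut a θ S ⬝ᵥ x) ^ 2 - (∑ S ∈ 𝒮, π S * (abarOut a θ S ⬝ᵥ x)) ^ 2 := by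
  simp only [mismatchOut, sub_mulVec, dotProduct_sub, dotProduct_sum_smul_mulVec,
    dotProduct_vecMulVec_self_mulVec, sum_smul_dotProduct]

lemma isHermitian_smul_designMOut_sub_mismatchOut (e : ℝ) :
    (e • designMOut a θ 𝒮 π - mismatchOut a θ 𝒮 π).IsHermitian :=
  ((isHermitian_sum_smul 𝒮 π fun S _ => isHermitian_fisherOut a θ S).smul
      (IsSelfAdjoint.all e)).sub
    ((isHermitian_sum_smul 𝒮 π fun _ _ => isHermitian_vecMulVec_self _).sub
      (isHermitian_vecMulVec_self _))

lemma posSemidef_smul_designMOut_sub_mismatchOut {e : ℝ} (hπ : ∀ S, 0 ≤ π S)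
    (he : ∀ S ∈ 𝒮, π S ≠ 0 → ∑ j ∈ S, Real.exp (a j ⬝ᵥ θ) ≤ e) :
    (e • designMOut a θ 𝒮 π - mismatchOut a θ 𝒮 π).PosSemidef := by
  refine .of_dotProduct_mulVec_nonneg (isHermitian_smul_designMOut_sub_mismatchOut a θ 𝒮 π e)
    fun x => ?_
  have hterm : ∀ S ∈ 𝒮, π S * (abarOut a θ S ⬝ᵥ x) ^ 2 ≤
      e * (π S * (x ⬝ᵥ (fisherOut a θ S *ᵥ x))) := by
    intro S hS
    rcases eq_or_ne (π S) 0 with h0 | h0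
    · simp [h0]
    calc π S * (abarOut a θ S ⬝ᵥ x) ^ 2
        ≤ π S * ((∑ j ∈ S, Real.exp (a j ⬝ᵥ θ)) * (x ⬝ᵥ (fisherOut a θ S *ᵥ x))) :=
          mul_le_mul_of_nonneg_left (sq_abarOut_dotProduct_le a θ S x) (hπ S)
      _ ≤ π S * (e * (x ⬝ᵥ (fisherOut a θ S *ᵥ x))) := by
          gcongr
          · exact hπ S
          · exact dotProduct_fisherOut_mulVec_nonneg a θ S x
          · exact he S hS h0
      _ = e * (π S * (x ⬝ᵥ (fisherOut a θ S *ᵥ x))) := mul_left_comm _ _ _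
  rw [star_trivial, sub_mulVec, dotProduct_sub, smul_mulVec, dotProduct_smul, smul_eq_mul,
    designMOut, dotProduct_sum_smul_mulVec, dotProduct_mismatchOut_mulVec, mul_sum]
  nlinarith [sum_le_sum hterm, sq_nonneg (∑ S ∈ 𝒮, π S * (abarOut a θ S ⬝ᵥ x))]

end Model

theorem mismatch_bound_outside_option_general {N d K : ℕ} (B : ℝ) (a : Fin N → Fin d → ℝ)
    (θ₀ : Fin d → ℝ)
    (𝒮 : Finset (Finset (Fin N)))
    (π : Finset (Fin N) → ℝ) (hπ : IsDesign 𝒮 π) :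
    ((sSup ((fun S : Finset (Fin N) => ∑ j ∈ S, Real.exp (a j ⬝ᵥ θ₀)) ''
          {S : Finset (Fin N) | S ∈ 𝒮 ∧ π S ≠ 0})) • designMOut a θ₀ 𝒮 π -
        mismatchOut a θ₀ 𝒮 π).PosSemidef ∧
    ((∀ S ∈ 𝒮, S.card ≤ K) → (∀ j : Fin N, a j ⬝ᵥ θ₀ ≤ B) →
      sInf {ε : ℝ | 0 ≤ ε ∧ (ε • designMOut a θ₀ 𝒮 π - mismatchOut a θ₀ 𝒮 π).PosSemidef} ≤
        K * Real.exp B) := by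
  have hbdd : BddAbove ((fun S : Finset (Fin N) => ∑ j ∈ S, Real.exp (a j ⬝ᵥ θ₀)) ''
      {S : Finset (Fin N) | S ∈ 𝒮 ∧ π S ≠ 0}) :=
    ((𝒮.finite_toSet.subset fun _ hS => hS.1).image _).bddAbove
  refine ⟨posSemidef_smul_designMOut_sub_mismatchOut a θ₀ 𝒮 π hπ.1
    fun S hS h0 => le_csSup hbdd ⟨S, ⟨hS, h0⟩, rfl⟩, fun hK hB => ?_⟩
  have hweight : ∀ S ∈ 𝒮, π S ≠ 0 → ∑ j ∈ S, Real.exp (a j ⬝ᵥ θ₀) ≤ K * Real.exp B :=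
    fun S hS _ => calc
      ∑ j ∈ S, Real.exp (a j ⬝ᵥ θ₀) ≤ S.card • Real.exp B :=
        sum_le_card_nsmul S _ _ fun j _ => Real.exp_le_exp.mpr (hB j)
      _ ≤ K * Real.exp B := by
        rw [nsmul_eq_mul]; gcongr; exact_mod_cast hK S hS
  exact csInf_le ⟨0, fun ε hε => hε.1⟩
    ⟨by positivity, posSemidef_smul_designMOut_sub_mismatchOut a θ₀ 𝒮 π hπ.1 hweight⟩

/-- Bound on the lifting error under the outside-option MNL model:
`Δ(π) ⪯ (max_{S ∈ supp π} Σ_{j∈S} w_j) · M(π)`, and under the size and utility bounds the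
least `ε ≥ 0` with `Δ(π) ⪯ ε M(π)` is at most `K e^B`. -/
theorem mismatch_bound_outside_option {N d K : ℕ} (B : ℝ) (a : Fin N → Fin d → ℝ)
    (θ₀ : Fin d → ℝ)
    (𝒮 : Finset (Finset (Fin N))) (h𝒮 : ∀ S ∈ 𝒮, S.Nonempty)
    (π : Finset (Fin N) → ℝ) (hπ : IsDesign 𝒮 π) :
    ((sSup ((fun S : Finset (Fin N) => ∑ j ∈ S, Real.exp (a j ⬝ᵥ θ₀)) ''
          {S : Finset (Fin N) | S ∈ 𝒮 ∧ π S ≠ 0})) • designMOut a θ₀ 𝒮 π -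
        mismatchOut a θ₀ 𝒮 π).PosSemidef ∧
    ((∀ S ∈ 𝒮, S.card ≤ K) → (∀ j : Fin N, a j ⬝ᵥ θ₀ ≤ B) →
      sInf {ε : ℝ | 0 ≤ ε ∧ (ε • designMOut a θ₀ 𝒮 π - mismatchOut a θ₀ 𝒮 π).PosSemidef} ≤
        K * Real.exp B) :=
  mismatch_bound_outside_option_general B a θ₀ 𝒮 π hπ

end
end

section
/- Fix θ₀ ∈ ℝ^d, feature vectors a_1, …, a_N ∈ ℝ^d, and a positive definite d×d matrix M. For a nonempty subset S ⊆ [N] with |S| ≥ 2, let x ∈ {0,1}^N be its indicator vector, and define w_i := exp(a_iᵀθ₀), s_i := a_iᵀ M⁻¹ a_i, r_i := w_i s_i, and G_{ij} := w_i w_j a_iᵀ M⁻¹ a_j. Then, under the MNL model without outside option, tr(M⁻¹ I_{θ₀}(S)) = ((wᵀx)(rᵀx) − xᵀ G x) / (wᵀx)². Equivalently, with A := −(1/2)(w rᵀ + r wᵀ) + G and B := w wᵀ, tr(M⁻¹ I_{θ₀}(S)) = −(xᵀ A x)/(xᵀ B x). -/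
open Matrix

noncomputable section

lemma trace_mul_vecMulVec {d : ℕ} (P : Matrix (Fin d) (Fin d) ℝ) (u v : Fin d → ℝ) :
    (P * vecMulVec u v).trace = v ⬝ᵥ (P *ᵥ u) := by
  simp [Matrix.trace, Matrix.diag, Matrix.mul_apply, Matrix.vecMulVec_apply,
    Matrix.mulVec, dotProduct, Finset.mul_sum]
  congr 1; ext k; congr 1; ext l; ring

lemma dot_indicator {N : ℕ} (S : Finset (Fin N)) (x v : Fin N → ℝ)
    (hx : ∀ i, x i = if i ∈ S then 1 else 0) :
    v ⬝ᵥ x = ∑ i ∈ S, v i := by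
  simp [dotProduct, hx, Finset.sum_ite_eq', mul_ite]

lemma dot_vecMulVec_mulVec {N : ℕ} (u v x : Fin N → ℝ) :
    x ⬝ᵥ (vecMulVec u v *ᵥ x) = (u ⬝ᵥ x) * (v ⬝ᵥ x) := by
  simp [Matrix.vecMulVec_apply, Matrix.mulVec, dotProduct, Finset.mul_sum, Finset.sum_mul]
  rw [Finset.sum_comm]
  congr 1; ext i; congr 1; ext j; ring

lemma dot_mulVec_indicator {N : ℕ} (S : Finset (Fin N)) (x : Fin N → ℝ)
    (hx : ∀ i, x i = if i ∈ S then 1 else 0) (G : Matrix (Fin N) (Fin N) ℝ) :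
    x ⬝ᵥ (G *ᵥ x) = ∑ i ∈ S, ∑ j ∈ S, G i j := by
  simp [Matrix.mulVec, dotProduct, hx, mul_ite, ite_mul, Finset.sum_ite_eq', Finset.mul_sum]

/-- Quadratic-fractional reformulation of the linear maximization oracle: with the indicator
vector `x` of `S`, `tr(M⁻¹ I_{θ₀}(S)) = ((wᵀx)(rᵀx) − xᵀGx)/(wᵀx)² = −(xᵀAx)/(xᵀBx)`. -/
theorem lmo_trace_qfip {N d : ℕ} (a : Fin N → Fin d → ℝ) (θ₀ : Fin d → ℝ)
    (M : Matrix (Fin d) (Fin d) ℝ) (hM : M.PosDef)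
    (S : Finset (Fin N)) (hS : 2 ≤ S.card)
    (x : Fin N → ℝ) (hx : ∀ i, x i = if i ∈ S then 1 else 0)
    (w s r : Fin N → ℝ) (G : Matrix (Fin N) (Fin N) ℝ)
    (hw : ∀ i, w i = Real.exp (a i ⬝ᵥ θ₀))
    (hs : ∀ i, s i = a i ⬝ᵥ (M⁻¹ *ᵥ a i))
    (hr : ∀ i, r i = w i * s i)
    (hG : ∀ i j, G i j = w i * w j * (a i ⬝ᵥ (M⁻¹ *ᵥ a j)))
    (A B : Matrix (Fin N) (Fin N) ℝ)
    (hA : A = -((1 / 2 : ℝ) • (vecMulVec w r + vecMulVec r w)) + G)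
    (hB : B = vecMulVec w w) :
    (M⁻¹ * fisher a θ₀ S).trace =
        ((w ⬝ᵥ x) * (r ⬝ᵥ x) - x ⬝ᵥ (G *ᵥ x)) / (w ⬝ᵥ x) ^ 2 ∧
      (M⁻¹ * fisher a θ₀ S).trace = -(x ⬝ᵥ (A *ᵥ x)) / (x ⬝ᵥ (B *ᵥ x)) := by
  have hSne : S.Nonempty := Finset.card_pos.mp (by omega)
  set W : ℝ := ∑ j ∈ S, w j with hW
  have hwpos : ∀ i, 0 < w i := fun i => by rw [hw]; exact Real.exp_pos _
  have hWpos : 0 < W := Finset.sum_pos (fun i _ => hwpos i) hSne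
  -- symmetry of M⁻¹
  have hMt : M⁻¹ᵀ = M⁻¹ := by
    rw [Matrix.transpose_nonsing_inv]
    congr 1
    simpa using hM.1.eq
  have hQsym : ∀ u v : Fin d → ℝ, u ⬝ᵥ (M⁻¹ *ᵥ v) = v ⬝ᵥ (M⁻¹ *ᵥ u) := by
    intro u v
    rw [Matrix.dotProduct_mulVec, ← Matrix.mulVec_transpose, hMt, dotProduct_comm]
  set p : Fin N → ℝ := mnlP a θ₀ S with hpdef
  have hp : ∀ i, p i = w i / W := by
    intro i
    simp only [hpdef, mnlP, hW]
    rw [hw i]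
    congr 1
    exact Finset.sum_congr rfl fun j _ => (hw j).symm
  set ab : Fin d → ℝ := abar a θ₀ S with hab
  set qr : Fin N → Fin N → ℝ := fun i j => a i ⬝ᵥ (M⁻¹ *ᵥ a j) with hqr
  have hqrsym : ∀ i j, qr i j = qr j i := fun i j => hQsym _ _
  have hA1 : ∀ v : Fin d → ℝ, ab ⬝ᵥ (M⁻¹ *ᵥ v) = ∑ i ∈ S, p i * (a i ⬝ᵥ (M⁻¹ *ᵥ v)) := by
    intro v
    simp only [hab, abar, dotProduct, Finset.sum_apply, Pi.smul_apply, smul_eq_mul,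
      Finset.sum_mul, ← hpdef]
    rw [Finset.sum_comm]
    refine Finset.sum_congr rfl fun i _ => ?_
    rw [Finset.mul_sum]
    exact Finset.sum_congr rfl fun k _ => by ring
  have hA2 : ∀ v : Fin d → ℝ, v ⬝ᵥ (M⁻¹ *ᵥ ab) = ∑ i ∈ S, p i * (v ⬝ᵥ (M⁻¹ *ᵥ a i)) := by
    intro v
    rw [hQsym, hA1]
    exact Finset.sum_congr rfl fun i _ => by rw [hQsym]
  have hQabab : ab ⬝ᵥ (M⁻¹ *ᵥ ab) = ∑ i ∈ S, ∑ j ∈ S, p i * p j * qr i j := by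
    rw [hA1]
    refine Finset.sum_congr rfl fun i _ => ?_
    rw [hA2, Finset.mul_sum]
    exact Finset.sum_congr rfl fun j _ => by ring
  have hsum1 : ∑ i ∈ S, p i = 1 := by
    rw [Finset.sum_congr rfl fun i _ => hp i, ← Finset.sum_div]
    exact div_self hWpos.ne'
  have h0 : (M⁻¹ * fisher a θ₀ S).trace
      = ∑ i ∈ S, p i * ((a i - ab) ⬝ᵥ (M⁻¹ *ᵥ (a i - ab))) := by
    simp [fisher, Matrix.mul_sum, Matrix.trace_sum, Matrix.mul_smul, Matrix.trace_smul,
      trace_mul_vecMulVec, smul_eq_mul, hab, hpdef]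
  have hterm : ∀ i, (a i - ab) ⬝ᵥ (M⁻¹ *ᵥ (a i - ab))
      = qr i i - (a i ⬝ᵥ (M⁻¹ *ᵥ ab)) - (ab ⬝ᵥ (M⁻¹ *ᵥ a i)) + ab ⬝ᵥ (M⁻¹ *ᵥ ab) := by
    intro i
    simp only [Matrix.mulVec_sub, dotProduct_sub, sub_dotProduct, hqr]
    ring
  have h1 : (M⁻¹ * fisher a θ₀ S).trace
      = (∑ i ∈ S, p i * qr i i) - ∑ i ∈ S, ∑ j ∈ S, p i * p j * qr i j := by
    rw [h0]
    have e1 : ∑ i ∈ S, p i * ((a i - ab) ⬝ᵥ (M⁻¹ *ᵥ (a i - ab)))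
        = ∑ i ∈ S, (p i * qr i i - p i * (∑ j ∈ S, p j * qr i j)
            - p i * (∑ j ∈ S, p j * qr j i) + p i * (ab ⬝ᵥ (M⁻¹ *ᵥ ab))) := by
      refine Finset.sum_congr rfl fun i _ => ?_
      rw [hterm i, hA2 (a i), hA1 (a i)]
      ring
    rw [e1]
    have e2 : ∑ i ∈ S, p i * (∑ j ∈ S, p j * qr i j) = ∑ i ∈ S, ∑ j ∈ S, p i * p j * qr i j := by
      refine Finset.sum_congr rfl fun i _ => ?_
      rw [Finset.mul_sum]; exact Finset.sum_congr rfl fun j _ => by ring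
    have e3 : ∑ i ∈ S, p i * (∑ j ∈ S, p j * qr j i) = ∑ i ∈ S, ∑ j ∈ S, p i * p j * qr i j := by
      refine Finset.sum_congr rfl fun i _ => ?_
      rw [Finset.mul_sum]
      exact Finset.sum_congr rfl fun j _ => by rw [hqrsym j i]; ring
    have e4 : ∑ i ∈ S, p i * (ab ⬝ᵥ (M⁻¹ *ᵥ ab)) = ab ⬝ᵥ (M⁻¹ *ᵥ ab) := by
      rw [← Finset.sum_mul, hsum1, one_mul]
    simp only [Finset.sum_add_distrib, Finset.sum_sub_distrib]
    rw [e2, e3, e4, hQabab]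
    ring
  -- numeric values
  have hwx : w ⬝ᵥ x = W := dot_indicator S x w hx
  have hrx : r ⬝ᵥ x = ∑ i ∈ S, r i := dot_indicator S x r hx
  have hGx : x ⬝ᵥ (G *ᵥ x) = ∑ i ∈ S, ∑ j ∈ S, G i j := dot_mulVec_indicator S x hx G
  have hnum1 : ∑ i ∈ S, p i * qr i i = (∑ i ∈ S, r i) / W := by
    rw [Finset.sum_div]
    refine Finset.sum_congr rfl fun i _ => ?_
    rw [hp i, hr i, hs i]
    simp only [hqr]
    rw [div_mul_eq_mul_div]
  have hnum2 : ∑ i ∈ S, ∑ j ∈ S, p i * p j * qr i j = (∑ i ∈ S, ∑ j ∈ S, G i j) / W ^ 2 := by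
    rw [Finset.sum_div]
    refine Finset.sum_congr rfl fun i _ => ?_
    rw [Finset.sum_div]
    refine Finset.sum_congr rfl fun j _ => ?_
    rw [hp i, hp j, hG i j]
    simp only [hqr]
    rw [div_mul_div_comm, div_mul_eq_mul_div, ← pow_two]
  have hmain : (M⁻¹ * fisher a θ₀ S).trace
      = ((w ⬝ᵥ x) * (r ⬝ᵥ x) - x ⬝ᵥ (G *ᵥ x)) / (w ⬝ᵥ x) ^ 2 := by
    rw [h1, hnum1, hnum2, hwx, hrx, hGx]
    field_simp
  refine ⟨hmain, ?_⟩
  have hAx : x ⬝ᵥ (A *ᵥ x) = -((w ⬝ᵥ x) * (r ⬝ᵥ x)) + x ⬝ᵥ (G *ᵥ x) := by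
    rw [hA]
    simp only [Matrix.add_mulVec, Matrix.neg_mulVec, Matrix.smul_mulVec,
      dotProduct_add, dotProduct_neg, dotProduct_smul, dot_vecMulVec_mulVec, smul_eq_mul]
    have h1 : r ⬝ᵥ x = x ⬝ᵥ r := dotProduct_comm _ _
    have h2 : w ⬝ᵥ x = x ⬝ᵥ w := dotProduct_comm _ _
    rw [h1, h2]; ring
  have hBx : x ⬝ᵥ (B *ᵥ x) = (w ⬝ᵥ x) ^ 2 := by
    rw [hB, dot_vecMulVec_mulVec]; ring
  rw [hmain, hAx, hBx]
  ring


end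
end
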